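/- arXiv:2312.13760 — 3 statements merged into one kernel-verified Lean document; each statement's English description precedes it below -/
import Mathlib

section
/- Let $\xi\in\mathbb{R}^{Nn}$ with $|\xi|>1+\frac{\delta}{2}$ (where $\delta>0$), let $\tilde\xi\in\mathbb{R}^{Nn}$ with $|\tilde\xi|\le|\xi|$, and set $\xi_s=\xi+s(\tilde\xi-\xi)$ for $s\in[0,1]$. Then for all $s\in[0,\frac{|\xi|-1-\delta/2}{4|\xi|}]$ one has $(|\xi_s|-1-\tfrac{\delta}{2})_+\ge \tfrac12(|\xi|-1-\tfrac{\delta}{2})$, and consequently for $p>1$, $\int_0^1(|\xi_s|-1-\tfrac{\delta}{2})_+^{p-1}ds\ \ge\ \frac{(|\xi|-1-\frac{\delta}{2})^p}{2^{p+1}|\xi|}$. -/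
theorem segment_lower_bound_le (N n : ℕ) (δ p : ℝ) (hδ : 0 < δ) (hp : 1 < p)
    (ξ ξ' : EuclideanSpace ℝ (Fin (N * n)))
    (hξ : 1 + δ / 2 < ‖ξ‖) (hξ' : ‖ξ'‖ ≤ ‖ξ‖) :
    (∀ s ∈ Set.Icc (0 : ℝ) ((‖ξ‖ - 1 - δ / 2) / (4 * ‖ξ‖)),
        (‖ξ‖ - 1 - δ / 2) / 2 ≤ max (‖ξ + s • (ξ' - ξ)‖ - 1 - δ / 2) 0) ∧
      (‖ξ‖ - 1 - δ / 2) ^ p / (2 ^ (p + 1) * ‖ξ‖) ≤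
        ∫ s in (0 : ℝ)..1, (max (‖ξ + s • (ξ' - ξ)‖ - 1 - δ / 2) 0) ^ (p - 1) := by
  set A : ℝ := ‖ξ‖ - 1 - δ / 2 with hAdef
  have hA : 0 < A := by simp only [hAdef]; linarith
  have hξpos : 0 < ‖ξ‖ := by linarith
  set T : ℝ := A / (4 * ‖ξ‖) with hTdef
  clear_value A T
  have hTpos : 0 < T := hTdef ▸ div_pos hA (by linarith : (0:ℝ) < 4 * ‖ξ‖)
  have hT1 : T ≤ 1 := by
    rw [hTdef, div_le_one (by linarith)]
    simp only [hAdef]; linarith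
  have key : ∀ s ∈ Set.Icc (0 : ℝ) T,
      A / 2 ≤ max (‖ξ + s • (ξ' - ξ)‖ - 1 - δ / 2) 0 := by
    rintro s ⟨hs0, hsT⟩
    have hsA : 2 * s * ‖ξ‖ ≤ A / 2 := by
      rw [hTdef] at hsT
      have h := (le_div_iff₀ (by linarith : (0:ℝ) < 4 * ‖ξ‖)).mp hsT
      calc 2 * s * ‖ξ‖ = (s * (4 * ‖ξ‖)) / 2 := by ring
        _ ≤ A / 2 := by linarith
    have heq : ξ + s • (ξ' - ξ) = (1 - s) • ξ + s • ξ' := by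
      rw [smul_sub, sub_smul, one_smul]; abel
    have hnorm : (1 - s) * ‖ξ‖ - s * ‖ξ‖ ≤ ‖ξ + s • (ξ' - ξ)‖ := by
      rw [heq]
      have h1 : ‖(1 - s) • ξ‖ ≤ ‖(1 - s) • ξ + s • ξ'‖ + ‖s • ξ'‖ :=
        norm_le_add_norm_add _ _
      have h2 : ‖s • ξ'‖ ≤ s * ‖ξ‖ := by
        rw [norm_smul, Real.norm_eq_abs, abs_of_nonneg hs0]
        exact mul_le_mul_of_nonneg_left hξ' hs0
      have hs12 : s ≤ 1 := le_trans hsT hT1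
      have h3 : ‖(1 - s) • ξ‖ = (1 - s) * ‖ξ‖ := by
        rw [norm_smul, Real.norm_eq_abs, abs_of_nonneg (by linarith)]
      linarith
    have hlow : A / 2 ≤ ‖ξ + s • (ξ' - ξ)‖ - 1 - δ / 2 := by
      have : ‖ξ‖ - 2 * s * ‖ξ‖ ≤ ‖ξ + s • (ξ' - ξ)‖ := by nlinarith
      simp only [hAdef] at hsA ⊢
      linarith
    exact le_max_of_le_left hlow
  refine ⟨key, ?_⟩
  set f : ℝ → ℝ := fun s => (max (‖ξ + s • (ξ' - ξ)‖ - 1 - δ / 2) 0) ^ (p - 1) with hfdef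
  have hcont : Continuous f := by
    apply Continuous.rpow_const
    · exact (((continuous_const.add (continuous_id.smul continuous_const)).norm.sub
        continuous_const).sub continuous_const).max continuous_const
    · intro x; right; linarith
  have hfi : IntervalIntegrable f MeasureTheory.volume 0 1 :=
    hcont.intervalIntegrable 0 1
  have hfnonneg : ∀ x, 0 ≤ f x := fun x =>
    Real.rpow_nonneg (le_max_right _ _) _
  have h1 : ∫ s in (0:ℝ)..T, f s ≤ ∫ s in (0:ℝ)..1, f s := by
    apply intervalIntegral.integral_mono_interval (le_refl (0:ℝ)) hTpos.le hT1
    · exact Filter.Eventually.of_forall hfnonneg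
    · exact hfi
  have h2 : T * (A / 2) ^ (p - 1) ≤ ∫ s in (0:ℝ)..T, f s := by
    have := intervalIntegral.integral_mono_on hTpos.le
      (intervalIntegrable_const (μ := MeasureTheory.volume) (c := (A / 2) ^ (p - 1)))
      (hcont.intervalIntegrable 0 T)
      (fun x hx => Real.rpow_le_rpow (by linarith) (key x hx) (by linarith))
    simpa using this
  have heqv : T * (A / 2) ^ (p - 1) = A ^ p / (2 ^ (p + 1) * ‖ξ‖) := by
    rw [Real.div_rpow hA.le (by norm_num), hTdef]
    have hAp : A ^ (p - 1) = A ^ p / A := by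
      rw [Real.rpow_sub hA, Real.rpow_one]
    have h2p : (2:ℝ) ^ (p + 1) = 2 ^ (p - 1) * 4 := by
      rw [show p + 1 = (p - 1) + 2 by ring, Real.rpow_add (by norm_num)]
      norm_num
    rw [hAp, h2p]
    have h2pne : (0:ℝ) < (2:ℝ) ^ (p - 1) := Real.rpow_pos_of_pos (by norm_num) _
    field_simp
  calc A ^ p / (2 ^ (p + 1) * ‖ξ‖) = T * (A / 2) ^ (p - 1) := heqv.symm
    _ ≤ ∫ s in (0:ℝ)..T, f s := h2
    _ ≤ _ := h1
end

section
/- Let $\xi\in\mathbb{R}^{Nn}$ with $|\xi|>1+\frac{\delta}{2}$ (where $\delta>0$), let $\tilde\xi\in\mathbb{R}^{Nn}$ with $|\tilde\xi|>|\xi|$, and set $\xi_s=\xi+s(\tilde\xi-\xi)$. Then for all $s\in[\frac{3|\xi|+1+\delta/2}{4|\xi|},1]$, $(|\xi_s|-1-\tfrac{\delta}{2})_+\ge \tfrac12(|\xi|-1-\tfrac{\delta}{2})$, and consequently for $p>1$, $\int_0^1(|\xi_s|-1-\tfrac{\delta}{2})_+^{p-1}ds\ \ge\ \frac{(|\xi|-1-\frac{\delta}{2})^p}{2^{p+1}|\xi|}$.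 -/
theorem segment_lower_bound_gt (N n : ℕ) (δ p : ℝ) (hδ : 0 < δ) (hp : 1 < p)
    (ξ ξ' : EuclideanSpace ℝ (Fin (N * n)))
    (hξ : 1 + δ / 2 < ‖ξ‖) (hξ' : ‖ξ‖ < ‖ξ'‖) :
    (∀ s ∈ Set.Icc ((3 * ‖ξ‖ + 1 + δ / 2) / (4 * ‖ξ‖)) (1 : ℝ),
        (‖ξ‖ - 1 - δ / 2) / 2 ≤ max (‖ξ + s • (ξ' - ξ)‖ - 1 - δ / 2) 0) ∧
      (‖ξ‖ - 1 - δ / 2) ^ p / (2 ^ (p + 1) * ‖ξ‖) ≤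
        ∫ s in (0 : ℝ)..1, (max (‖ξ + s • (ξ' - ξ)‖ - 1 - δ / 2) 0) ^ (p - 1) := by
  have ha0 : 0 < ‖ξ‖ := by linarith
  set a := ‖ξ‖ with ha
  have hx : 0 < a - 1 - δ / 2 := by linarith
  set x := a - 1 - δ / 2 with hxdef
  set s₀ := (3 * a + 1 + δ / 2) / (4 * a) with hs0
  have h4a : (0:ℝ) < 4 * a := by linarith
  have hs₀0 : 0 < s₀ := div_pos (by linarith) h4a
  have hs₀1 : s₀ ≤ 1 := by rw [div_le_one h4a]; linarith
  have hs0mul : s₀ * (4 * a) = 3 * a + 1 + δ / 2 := div_mul_cancel₀ _ (ne_of_gt h4a)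
  have key : ∀ s ∈ Set.Icc s₀ (1:ℝ),
      x / 2 ≤ max (‖ξ + s • (ξ' - ξ)‖ - 1 - δ / 2) 0 := by
    intro s hs
    obtain ⟨hs1, hs2⟩ := hs
    have hs_nonneg : (0:ℝ) ≤ s := le_trans hs₀0.le hs1
    have hre : ξ + s • (ξ' - ξ) = (1 - s) • ξ + s • ξ' := by module
    have h1 : s * ‖ξ'‖ - (1 - s) * a ≤ ‖ξ + s • (ξ' - ξ)‖ := by
      rw [hre]
      have hnn := norm_sub_norm_le (s • ξ') (-((1 - s) • ξ))
      rw [norm_neg, sub_neg_eq_add] at hnn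
      have : ‖s • ξ' + (1 - s) • ξ‖ = ‖(1 - s) • ξ + s • ξ'‖ := by rw [add_comm]
      rw [this] at hnn
      rw [norm_smul, norm_smul, Real.norm_eq_abs, Real.norm_eq_abs,
        abs_of_nonneg hs_nonneg, abs_of_nonneg (by linarith : (0:ℝ) ≤ 1 - s)] at hnn
      exact hnn
    have h2 : (2 * s - 1) * a ≤ s * ‖ξ'‖ - (1 - s) * a := by
      nlinarith [mul_le_mul_of_nonneg_left hξ'.le hs_nonneg]
    have h3 : (a + 1 + δ / 2) / 2 ≤ (2 * s - 1) * a := by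
      nlinarith [mul_nonneg (sub_nonneg.2 hs1) ha0.le]
    have h4 : x / 2 ≤ ‖ξ + s • (ξ' - ξ)‖ - 1 - δ / 2 := by
      have := le_trans h3 (le_trans h2 h1)
      simp only [hxdef]; linarith
    exact le_trans h4 (le_max_left _ _)
  refine ⟨key, ?_⟩
  have hp' : 0 < p - 1 := by linarith
  set f : ℝ → ℝ := fun s => (max (‖ξ + s • (ξ' - ξ)‖ - 1 - δ / 2) 0) ^ (p - 1) with hf_def
  have hg : Continuous fun s : ℝ => max (‖ξ + s • (ξ' - ξ)‖ - 1 - δ / 2) 0 := by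
    apply Continuous.max _ continuous_const
    exact ((continuous_const.add (continuous_id.smul continuous_const)).norm.sub
      continuous_const).sub continuous_const
  have hf : Continuous f := by
    rw [continuous_iff_continuousAt]
    intro s
    exact (Real.continuousAt_rpow_const _ _ (Or.inr hp'.le)).comp hg.continuousAt
  have hfnn : ∀ u : ℝ, 0 ≤ f u := fun u => Real.rpow_nonneg (le_max_right _ _) _
  have h1 : (∫ s in s₀..1, f s) ≤ ∫ s in (0:ℝ)..1, f s := by
    rw [← intervalIntegral.integral_add_adjacent_intervals
      (hf.intervalIntegrable 0 s₀) (hf.intervalIntegrable s₀ 1)]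
    have h0 : 0 ≤ ∫ s in (0:ℝ)..s₀, f s :=
      intervalIntegral.integral_nonneg hs₀0.le (fun u _ => hfnn u)
    linarith
  have h2 : (1 - s₀) * (x / 2) ^ (p - 1) ≤ ∫ s in s₀..1, f s := by
    have hmono := intervalIntegral.integral_mono_on (a := s₀) (b := 1)
      (f := fun _ => (x / 2) ^ (p - 1)) (g := f) hs₀1 (intervalIntegrable_const (μ := MeasureTheory.volume))
      (hf.intervalIntegrable s₀ 1)
      (fun s hs => Real.rpow_le_rpow (by positivity) (key s hs) hp'.le)
    simpa using hmono
  have hs0eq : 1 - s₀ = x / (4 * a) := by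
    field_simp [hs0, hxdef]
    linear_combination -hs0mul - hxdef
  have hc : (x / 2) ^ (p - 1) = x ^ (p - 1) / 2 ^ (p - 1) :=
    Real.div_rpow hx.le (by norm_num : (0:ℝ) ≤ 2) _
  have hxp : x ^ p = x ^ (p - 1) * x := by
    rw [← Real.rpow_add_one hx.ne' (p - 1), show p - 1 + 1 = p by ring]
  have h2p : (2:ℝ) ^ (p + 1) = 2 ^ (p - 1) * 4 := by
    rw [show p + 1 = (p - 1) + 2 by ring, Real.rpow_add (by norm_num : (0:ℝ) < 2)]
    norm_num
  have h2pm : (0:ℝ) < (2:ℝ) ^ (p - 1) := Real.rpow_pos_of_pos (by norm_num) _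
  have heq : x ^ p / (2 ^ (p + 1) * a) = (1 - s₀) * (x / 2) ^ (p - 1) := by
    rw [hs0eq, hc, hxp, h2p]
    field_simp
  rw [heq]
  exact le_trans h2 h1
end

section
/- Let $p>1$, $\delta>0$, and let $h:\mathbb{R}^+\to\mathbb{R}$ satisfy $h(t)\ge c\,\frac{(t-1-\delta/2)_+^{p-1}}{t}$ for all $t>0$ and some $c>0$. Suppose a vector field $B:\mathbb{R}^{Nn}\to\mathbb{R}^{Nn}$ is $C^1$ with $\langle D B(\zeta)\lambda,\lambda\rangle\ge h(|\zeta|)|\lambda|^2$ for all $\zeta\ne 0$ and $\lambda\in\mathbb{R}^{Nn}$. Then for every $\xi$ with $|\xi|>1+\frac{\delta}{2}$ and every $\tilde\xi\in\mathbb{R}^{Nn}$, $\langle B(\xi)-B(\tilde\xi),\xi-\tilde\xi\rangle\ \ge\ \frac{c}{2^{p+1}}\cdot\frac{(|\xi|-1-\frac{\delta}{2})^p}{|\xi|\,(|\xi|+|\tilde\xi|)}\,|\xi-\tilde\xi|^2$. -/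
open scoped RealInnerProductSpace

theorem monotonicity_from_ellipticity (N n : ℕ) (p δ c : ℝ) (hp : 1 < p) (hδ : 0 < δ)
    (hc : 0 < c) (h : ℝ → ℝ)
    (hh : ∀ t : ℝ, 0 < t → c * (max (t - 1 - δ / 2) 0) ^ (p - 1) / t ≤ h t)
    (B : EuclideanSpace ℝ (Fin (N * n)) → EuclideanSpace ℝ (Fin (N * n)))
    (hB : ContDiff ℝ 1 B)
    (hell : ∀ ζ : EuclideanSpace ℝ (Fin (N * n)), ζ ≠ 0 →
      ∀ lam : EuclideanSpace ℝ (Fin (N * n)), h ‖ζ‖ * ‖lam‖ ^ 2 ≤ ⟪fderiv ℝ B ζ lam, lam⟫)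
    (ξ ξ' : EuclideanSpace ℝ (Fin (N * n))) (hξ : 1 + δ / 2 < ‖ξ‖) :
    c / 2 ^ (p + 1) * ((‖ξ‖ - 1 - δ / 2) ^ p / (‖ξ‖ * (‖ξ‖ + ‖ξ'‖))) * ‖ξ - ξ'‖ ^ 2 ≤
      ⟪B ξ - B ξ', ξ - ξ'⟫ := by
  by_cases hvz : ξ = ξ'
  · simp [hvz]
  set v := ξ - ξ' with hv
  have hvne : v ≠ 0 := sub_ne_zero.mpr hvz
  have hw : 0 < ‖v‖ := norm_pos_iff.mpr hvne
  have ha : 0 < ‖ξ‖ := by linarith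
  set a := ‖ξ‖ with hadef
  set r := (a - (1 + δ / 2)) / 2 with hrdef
  have hr : 0 < r := by rw [hrdef]; linarith
  have hra : r ≤ a := by rw [hrdef]; linarith
  set σ := min 1 (r / ‖v‖) with hσdef
  have hσ0 : 0 < σ := lt_min one_pos (div_pos hr hw)
  have hσ1 : σ ≤ 1 := min_le_left _ _
  set γ : ℝ → EuclideanSpace ℝ (Fin (N * n)) := fun s => ξ + s • (ξ' - ξ) with hγ
  have hγcont : Continuous γ := by fun_prop
  have hDcont : Continuous (fun s => fderiv ℝ B (γ s)) :=
    (hB.continuous_fderiv one_ne_zero).comp hγcont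
  set g : ℝ → ℝ := fun s => ⟪fderiv ℝ B (γ s) v, v⟫ with hg
  have hgcont : Continuous g := (hDcont.clm_apply continuous_const).inner continuous_const
  -- derivative facts
  have hγd : ∀ s : ℝ, HasDerivAt γ (ξ' - ξ) s := by
    intro s
    simpa [hγ] using ((hasDerivAt_id s).smul_const (ξ' - ξ)).const_add ξ
  have hBd : ∀ s : ℝ, HasDerivAt (fun s => B (γ s)) (fderiv ℝ B (γ s) (ξ' - ξ)) s := fun s =>
    ((hB.differentiable one_ne_zero) (γ s)).hasFDerivAt.comp_hasDerivAt s (hγd s)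
  have hfd : ∀ s : ℝ, HasDerivAt (fun s => ⟪v, B (γ s)⟫) ⟪v, fderiv ℝ B (γ s) (ξ' - ξ)⟫ s := by
    intro s
    have := ((innerSL ℝ v).hasFDerivAt (x := B (γ s))).comp_hasDerivAt s (hBd s)
    exact this
  have hcont' : Continuous (fun s => ⟪v, fderiv ℝ B (γ s) (ξ' - ξ)⟫) :=
    continuous_const.inner (hDcont.clm_apply continuous_const)
  have hγ0 : γ 0 = ξ := by simp [hγ]
  have hγ1 : γ 1 = ξ' := by simp [hγ]
  have hkey : ⟪B ξ - B ξ', v⟫ = ∫ s in (0:ℝ)..1, g s := by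
    have hint := intervalIntegral.integral_eq_sub_of_hasDerivAt (a := (0:ℝ)) (b := 1)
      (fun s _ => hfd s) (hcont'.intervalIntegrable 0 1)
    rw [hγ0, hγ1] at hint
    have heq : ∀ s : ℝ, ⟪v, fderiv ℝ B (γ s) (ξ' - ξ)⟫ = -g s := by
      intro s
      have hw' : (ξ' - ξ) = -v := by rw [hv]; abel
      rw [hw', map_neg, inner_neg_right, hg, real_inner_comm]
    simp_rw [heq, intervalIntegral.integral_neg] at hint
    have : ⟪B ξ - B ξ', v⟫ = ⟪v, B ξ⟫ - ⟪v, B ξ'⟫ := by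
      rw [inner_sub_left, real_inner_comm (B ξ) v, real_inner_comm (B ξ') v]
    linarith
  -- nonnegativity of g
  have haux : ∀ t : ℝ, γ t ≠ 0 → 0 ≤ g t := by
    intro t ht
    have h1 := hell (γ t) ht v
    have h2 := hh ‖γ t‖ (norm_pos_iff.mpr ht)
    have h3 : (0:ℝ) ≤ c * (max (‖γ t‖ - 1 - δ / 2) 0) ^ (p - 1) / ‖γ t‖ := by positivity
    have h4 : 0 ≤ h ‖γ t‖ := h3.trans h2
    have h5 : 0 ≤ h ‖γ t‖ * ‖v‖ ^ 2 := mul_nonneg h4 (sq_nonneg _)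
    exact h5.trans h1
  have hgnn : ∀ s : ℝ, 0 ≤ g s := by
    intro s
    by_cases hzs : γ s = 0
    · have htend : Filter.Tendsto g (nhdsWithin s {s}ᶜ) (nhds (g s)) :=
        (hgcont.continuousAt).tendsto.mono_left nhdsWithin_le_nhds
      refine ge_of_tendsto htend ?_
      filter_upwards [self_mem_nhdsWithin] with t ht
      refine haux t ?_
      intro h0
      apply ht
      have hdiff : (t - s) • (ξ' - ξ) = 0 := by
        have hd : γ t - γ s = (t - s) • (ξ' - ξ) := by
          simp only [hγ]
          rw [sub_smul]
          abel
        rw [h0, hzs, sub_zero] at hd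
        exact hd.symm
      rcases smul_eq_zero.mp hdiff with h' | h'
      · exact sub_eq_zero.mp h'
      · exact absurd (by rw [hv, ← neg_sub ξ' ξ, h', neg_zero]) hvne
    · exact haux s hzs
  -- pointwise lower bound on [0, σ]
  set K := c * r ^ (p - 1) / (2 * a) * ‖v‖ ^ 2 with hKdef
  have hlow : ∀ s ∈ Set.Icc (0:ℝ) σ, K ≤ g s := by
    rintro s ⟨hs0, hsσ⟩
    have hsv : s * ‖v‖ ≤ r := by
      have h1 : s ≤ r / ‖v‖ := hsσ.trans (min_le_right _ _)
      calc s * ‖v‖ ≤ (r / ‖v‖) * ‖v‖ := mul_le_mul_of_nonneg_right h1 hw.le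
        _ = r := div_mul_cancel₀ _ hw.ne'
    have hnγ : ‖s • (ξ' - ξ)‖ = s * ‖v‖ := by
      rw [norm_smul, Real.norm_of_nonneg hs0, norm_sub_rev]
    have hγlb : a - s * ‖v‖ ≤ ‖γ s‖ := by
      have h1 : ‖ξ‖ ≤ ‖γ s‖ + ‖s • (ξ' - ξ)‖ := by
        calc ‖ξ‖ = ‖γ s - s • (ξ' - ξ)‖ := by rw [hγ]; simp
          _ ≤ ‖γ s‖ + ‖s • (ξ' - ξ)‖ := norm_sub_le _ _
      rw [hnγ] at h1
      linarith
    have hγub : ‖γ s‖ ≤ a + s * ‖v‖ := by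
      calc ‖γ s‖ ≤ ‖ξ‖ + ‖s • (ξ' - ξ)‖ := norm_add_le _ _
        _ = a + s * ‖v‖ := by rw [hnγ]
    have hm : 1 + δ / 2 + r ≤ ‖γ s‖ := by
      have : a - r = 1 + δ / 2 + r := by rw [hrdef]; ring
      linarith
    have hγpos : 0 < ‖γ s‖ := by linarith
    have hγne : γ s ≠ 0 := norm_pos_iff.mp hγpos
    have h2a : ‖γ s‖ ≤ 2 * a := by linarith
    have h1 := hell (γ s) hγne v
    have h2 := hh ‖γ s‖ hγpos
    have hmax : max (‖γ s‖ - 1 - δ / 2) 0 = ‖γ s‖ - 1 - δ / 2 := max_eq_left (by linarith)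
    rw [hmax] at h2
    have hrpow : r ^ (p - 1) ≤ (‖γ s‖ - 1 - δ / 2) ^ (p - 1) :=
      Real.rpow_le_rpow hr.le (by linarith) (by linarith)
    have hdiv : c * r ^ (p - 1) / (2 * a) ≤ c * (‖γ s‖ - 1 - δ / 2) ^ (p - 1) / ‖γ s‖ :=
      div_le_div₀ (mul_nonneg hc.le (Real.rpow_nonneg (by linarith) _))
        (mul_le_mul_of_nonneg_left hrpow hc.le) hγpos h2a
    calc K ≤ c * (‖γ s‖ - 1 - δ / 2) ^ (p - 1) / ‖γ s‖ * ‖v‖ ^ 2 :=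
          mul_le_mul_of_nonneg_right hdiv (sq_nonneg _)
      _ ≤ h ‖γ s‖ * ‖v‖ ^ 2 := mul_le_mul_of_nonneg_right h2 (sq_nonneg _)
      _ ≤ g s := h1
  -- integral bounds
  have hint1 : σ * K ≤ ∫ s in (0:ℝ)..σ, g s := by
    have := intervalIntegral.integral_mono_on hσ0.le (intervalIntegrable_const (μ := MeasureTheory.volume))
      (hgcont.intervalIntegrable 0 σ) hlow
    simp only [intervalIntegral.integral_const, smul_eq_mul, sub_zero] at this
    calc σ * K = K * σ := mul_comm _ _
      _ ≤ _ := by simpa [mul_comm] using this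
  have hint2 : (0:ℝ) ≤ ∫ s in σ..1, g s :=
    intervalIntegral.integral_nonneg hσ1 (fun s _ => hgnn s)
  have hsplit : (∫ s in (0:ℝ)..σ, g s) + ∫ s in σ..1, g s = ∫ s in (0:ℝ)..1, g s :=
    intervalIntegral.integral_add_adjacent_intervals (hgcont.intervalIntegrable 0 σ)
      (hgcont.intervalIntegrable σ 1)
  have hfinal : σ * K ≤ ⟪B ξ - B ξ', v⟫ := by rw [hkey, ← hsplit]; linarith
  -- arithmetic
  have hb : (0:ℝ) ≤ ‖ξ'‖ := norm_nonneg _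
  have hab : 0 < a + ‖ξ'‖ := by linarith
  have hwab : ‖v‖ ≤ a + ‖ξ'‖ := norm_sub_le _ _
  have hσlb : r / (a + ‖ξ'‖) ≤ σ := by
    refine le_min ?_ (div_le_div_of_nonneg_left hr.le hw hwab)
    rw [div_le_one hab]; linarith
  have hKnn : 0 ≤ K := by positivity
  have hLHS : c / 2 ^ (p + 1) * ((a - 1 - δ / 2) ^ p / (a * (a + ‖ξ'‖))) * ‖v‖ ^ 2
      = (r / (a + ‖ξ'‖)) * K := by
    have h2r : a - 1 - δ / 2 = 2 * r := by rw [hrdef]; ring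
    have hrp : r ^ (p - 1) = r ^ p / r := by
      rw [Real.rpow_sub hr, Real.rpow_one]
    rw [h2r, Real.mul_rpow (by norm_num) hr.le,
      Real.rpow_add (by norm_num : (0:ℝ) < 2) p 1, Real.rpow_one, hKdef, hrp]
    have h2p : (0:ℝ) < 2 ^ p := Real.rpow_pos_of_pos (by norm_num) p
    field_simp
  calc c / 2 ^ (p + 1) * ((a - 1 - δ / 2) ^ p / (a * (a + ‖ξ'‖))) * ‖v‖ ^ 2
      = (r / (a + ‖ξ'‖)) * K := hLHS
    _ ≤ σ * K := mul_le_mul_of_nonneg_right hσlb hKnn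
    _ ≤ ⟪B ξ - B ξ', v⟫ := hfinal
end
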